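/- arXiv:math/0602664 — 3 statements merged into one kernel-verified Lean document; each statement's English description precedes it below -/
import Mathlib

section
/- There exists a constant K ≥ 1 such that τ(x + y) ≤ K(τ(x) + τ(y)) for all x, y ∈ ℝ^d. -/
open MeasureTheory Matrix Filter Topology

/-- For a real `d × d` matrix `E` and `c > 0`, `matPow E c = c^E = exp((log c) • E)`,
where `exp` is the matrix exponential. -/
noncomputable def matPow {d : ℕ} (E : Matrix (Fin d) (Fin d) ℝ) (c : ℝ) :
    Matrix (Fin d) (Fin d) ℝ :=
  NormedSpace.exp (Real.log c • E)

/-- The setup of Biermé–Meerschaert–Scheffler "Operator scaling stable random fields":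
a real `d × d` matrix `E` whose (complex) eigenvalues all have positive real part, the
distinct real parts of the eigenvalues being `a 0 < a 1 < ... < a (p-1)` (so `a ⟨0,_⟩ = a₁`
and `a ⟨p-1,_⟩ = a_p`); a norm `ν = ‖·‖₀` on `ℝ^d` adapted to `E`, so that every `x ≠ 0`
has a unique polar decomposition `x = τ(x)^E l(x)` with radial part `τ(x) > 0` and
direction `l(x)` on the unit sphere `S₀ = {θ | ν θ = 1}`;  `τ` is continuous with
`τ(0) = 0` and satisfies the scaling relation `τ(c^E x) = c τ(x)`. -/
structure OSSetup (d p : ℕ) : Type where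
  hd : 0 < d
  hp : 0 < p
  hpd : p ≤ d
  E : Matrix (Fin d) (Fin d) ℝ
  a : Fin p → ℝ
  a_pos : 0 < a ⟨0, hp⟩
  a_mono : StrictMono a
  spec_re : ∀ μ ∈ ((E.charpoly.map (algebraMap ℝ ℂ)).roots), ∃ i, μ.re = a i
  spec_re' : ∀ i, ∃ μ ∈ ((E.charpoly.map (algebraMap ℝ ℂ)).roots), μ.re = a i
  ν : (Fin d → ℝ) → ℝ
  ν_eq_zero : ∀ x, ν x = 0 ↔ x = 0
  ν_add : ∀ x y, ν (x + y) ≤ ν x + ν y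
  ν_smul : ∀ (c : ℝ) (x), ν (c • x) = |c| * ν x
  τ : (Fin d → ℝ) → ℝ
  l : (Fin d → ℝ) → (Fin d → ℝ)
  τ_zero : τ 0 = 0
  τ_pos : ∀ x, x ≠ 0 → 0 < τ x
  τ_cont : Continuous τ
  l_sphere : ∀ x, x ≠ 0 → ν (l x) = 1
  polar : ∀ x, x ≠ 0 → (matPow E (τ x)).mulVec (l x) = x
  polar_unique : ∀ (r : ℝ) (θ : Fin d → ℝ), 0 < r → ν θ = 1 →
    τ ((matPow E r).mulVec θ) = r ∧ l ((matPow E r).mulVec θ) = θ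
  τ_scaling : ∀ c > 0, ∀ x, τ ((matPow E c).mulVec x) = c * τ x

/-- `a₁`, the smallest real part of the eigenvalues of `E`. -/
noncomputable def OSSetup.a1 {d p : ℕ} (S : OSSetup d p) : ℝ := S.a ⟨0, S.hp⟩

/-- `a_p`, the largest real part of the eigenvalues of `E`. -/
noncomputable def OSSetup.ap {d p : ℕ} (S : OSSetup d p) : ℝ :=
  S.a ⟨p - 1, Nat.sub_lt S.hp Nat.one_pos⟩

/-- `φ` is `E`-homogeneous: `φ(c^E x) = c • φ(x)` for all `c > 0` and `x ≠ 0`. -/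
def OSSetup.EHomogeneous {d p : ℕ} (S : OSSetup d p) (φ : (Fin d → ℝ) → ℝ) : Prop :=
  ∀ c > 0, ∀ x : Fin d → ℝ, x ≠ 0 → φ ((matPow S.E c).mulVec x) = c * φ x

/-- `φ : ℝ^d → [0,∞)` is `(β,E)`-admissible: it is continuous, nonnegative, positive
off `0`, and for every `0 < A < B` there is `C > 0` with
`|φ(x+y) − φ(y)| ≤ C τ(x)^β` whenever `τ(x) ≤ 1` and `A ≤ ‖y‖ ≤ B`. -/
def OSSetup.Admissible {d p : ℕ} (S : OSSetup d p) (β : ℝ) (φ : (Fin d → ℝ) → ℝ) : Prop :=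
  0 < β ∧ Continuous φ ∧ (∀ x, 0 ≤ φ x) ∧ (∀ x, x ≠ 0 → 0 < φ x) ∧
    ∀ A B : ℝ, 0 < A → A < B → ∃ C > 0, ∀ x y : Fin d → ℝ,
      S.τ x ≤ 1 → A ≤ ‖y‖ → ‖y‖ ≤ B → |φ (x + y) - φ y| ≤ C * S.τ x ^ β

/-!
The radial part equals `1` exactly on the unit sphere `S₀` of `‖·‖₀`, which is bounded. Outside a
ball containing `S₀` the function `τ` never takes the value `1`; that region is connected for
`d ≥ 2` (for `d = 1`, `c^E` is multiplication by a positive scalar, so `x` and `c^E x` lie on one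
ray) and scaling `x ↦ c^E x` reaches arbitrarily large values of `τ` there, so `τ > 1` outside the
ball. Hence `{τ ≤ 1}` is bounded, `τ` is bounded by some `K` on `{τ ≤ 1} + {τ ≤ 1}` by
compactness, and rescaling `x, y` by `(τ x + τ y)^(-E)` gives the inequality.
-/

open Metric Set

theorem Seminorm.exists_pos_mul_norm_le {E : Type*} [NormedAddCommGroup E] [NormedSpace ℝ E]
    [FiniteDimensional ℝ E] (q : Seminorm ℝ E) (hq : ∀ x, q x = 0 → x = 0) :
    ∃ m > 0, ∀ x, m * ‖x‖ ≤ q x := by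
  have hpos : ∀ u ∈ sphere (0 : E) 1, 0 < q u := fun u hu =>
    (apply_nonneg q u).lt_of_ne fun h => by simp [hq u h.symm] at hu
  obtain ⟨m, hm, hmq⟩ := (isCompact_sphere (0 : E) 1).exists_forall_le'
    q.convexOn.locallyLipschitz.continuous.continuousOn hpos
  refine ⟨m, hm, fun x => ?_⟩
  rcases eq_or_ne x 0 with rfl | hx
  · simp
  have hxn : 0 < ‖x‖ := norm_pos_iff.mpr hx
  calc m * ‖x‖ ≤ q (‖x‖⁻¹ • x) * ‖x‖ := by
        gcongr; exact hmq _ (by simp [norm_smul, hxn.ne'])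
    _ = q x := by rw [map_smul_eq_mul, norm_inv, norm_norm]; field_simp

theorem isPreconnected_setOf_lt_norm {E : Type*} [NormedAddCommGroup E] [NormedSpace ℝ E]
    (hE : 1 < Module.rank ℝ E) {R : ℝ} (hR : 0 ≤ R) : IsPreconnected {x : E | R < ‖x‖} := by
  have : {x : E | R < ‖x‖} = (fun p : E × ℝ => p.2 • p.1) '' (sphere 0 1 ×ˢ Ioi R) := by
    ext x
    constructor
    · intro hx
      have hxn : ‖x‖ ≠ 0 := (hR.trans_lt hx).ne'
      exact ⟨(‖x‖⁻¹ • x, ‖x‖), ⟨by simp [norm_smul, hxn], hx⟩, by simp [smul_smul, hxn]⟩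
    · rintro ⟨⟨u, s⟩, ⟨hu, hs⟩, rfl⟩
      simp_all [norm_smul, abs_of_pos (hR.trans_lt hs)]
  rw [this]
  exact ((isPathConnected_sphere hE 0 zero_le_one).isConnected.isPreconnected.prod
    isPreconnected_Ioi).image _ (by fun_prop)

theorem matPow_one {d : ℕ} (E : Matrix (Fin d) (Fin d) ℝ) : matPow E 1 = 1 := by
  simp [matPow]

theorem matPow_mul_matPow_inv {d : ℕ} (E : Matrix (Fin d) (Fin d) ℝ) (c : ℝ) :
    matPow E c * matPow E c⁻¹ = 1 := by
  rw [matPow, matPow, ← Matrix.exp_add_of_commute _ _ (((Commute.refl E).smul_left _).smul_right _),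
    ← add_smul, Real.log_inv, add_neg_cancel, zero_smul, NormedSpace.exp_zero]

theorem exists_pos_matPow_mulVec_eq_smul (E : Matrix (Fin 1) (Fin 1) ℝ) (c : ℝ) (x : Fin 1 → ℝ) :
    ∃ a : ℝ, 0 < a ∧ matPow E c *ᵥ x = a • x := by
  have hE : E = Matrix.diagonal fun _ => E 0 0 := by
    ext i j; fin_cases i; fin_cases j; rfl
  refine ⟨Real.exp (Real.log c * E 0 0), Real.exp_pos _, ?_⟩
  rw [matPow, hE, ← Matrix.diagonal_smul, Matrix.exp_diagonal]
  ext i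
  fin_cases i
  simp [Matrix.mulVec_diagonal, ← Real.exp_eq_exp_ℝ]

theorem exists_isPreconnected_lt_norm_mem_matPow_mulVec {d : ℕ} (E : Matrix (Fin d) (Fin d) ℝ)
    (c : ℝ) {R : ℝ} (hR : 0 ≤ R) {x : Fin d → ℝ} (hx : R < ‖x‖) (hcx : R < ‖matPow E c *ᵥ x‖) :
    ∃ C : Set (Fin d → ℝ), IsPreconnected C ∧ C ⊆ {y | R < ‖y‖} ∧ x ∈ C ∧ matPow E c *ᵥ x ∈ C := by
  rcases Nat.lt_or_ge d 2 with hd | hd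
  · interval_cases d
    · rw [Subsingleton.elim x 0, norm_zero] at hx
      exact absurd hR hx.not_ge
    · obtain ⟨a, ha, hax⟩ := exists_pos_matPow_mulVec_eq_smul E c x
      rw [hax] at hcx ⊢
      rw [norm_smul, Real.norm_of_nonneg ha.le] at hcx
      refine ⟨(· • x) '' uIcc 1 a, isPreconnected_uIcc.image _ (by fun_prop),
        ?_, ⟨1, left_mem_uIcc, one_smul _ _⟩, ⟨a, right_mem_uIcc, rfl⟩⟩
      rintro _ ⟨s, hs, rfl⟩
      have hs : min 1 a ≤ s := hs.1
      have : R < min 1 a * ‖x‖ := by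
        rw [min_mul_of_nonneg _ _ (norm_nonneg x), one_mul]; exact lt_min hx hcx
      rw [mem_ofPred_eq, norm_smul, Real.norm_of_nonneg ((lt_min one_pos ha).trans_le hs).le]
      exact this.trans_le (by gcongr)
  · refine ⟨_, isPreconnected_setOf_lt_norm ?_ hR, subset_rfl, hx, hcx⟩
    rw [rank_fin_fun]
    exact_mod_cast hd

namespace OSSetup

variable {d p : ℕ} (S : OSSetup d p)

theorem tau_nonneg (x : Fin d → ℝ) : 0 ≤ S.τ x := by
  rcases eq_or_ne x 0 with rfl | hx
  · rw [S.τ_zero]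
  · exact (S.τ_pos x hx).le

theorem tau_eq_zero_iff {x : Fin d → ℝ} : S.τ x = 0 ↔ x = 0 :=
  ⟨fun h => by_contra fun hx => (S.τ_pos x hx).ne' h, fun h => h ▸ S.τ_zero⟩

theorem nu_eq_one_of_tau_eq_one {x : Fin d → ℝ} (hx : S.τ x = 1) : S.ν x = 1 := by
  have hx0 : x ≠ 0 := fun h => by simp [h, S.τ_zero] at hx
  have := S.polar x hx0
  rw [hx, matPow_one, Matrix.one_mulVec] at this
  exact this ▸ S.l_sphere x hx0

def nuSeminorm : Seminorm ℝ (Fin d → ℝ) :=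
  Seminorm.of S.ν S.ν_add fun c x => by rw [S.ν_smul, Real.norm_eq_abs]

theorem exists_norm_le_of_tau_eq_one : ∃ R, 0 ≤ R ∧ ∀ x, S.τ x = 1 → ‖x‖ ≤ R := by
  obtain ⟨m, hm, hmν⟩ := S.nuSeminorm.exists_pos_mul_norm_le fun x => (S.ν_eq_zero x).mp
  refine ⟨1 / m, by positivity, fun x hx => (le_div_iff₀' hm).mpr ?_⟩
  exact S.nu_eq_one_of_tau_eq_one hx ▸ hmν x

theorem exists_tau_le_of_norm_le (R : ℝ) : ∃ M, ∀ x, ‖x‖ ≤ R → S.τ x ≤ M := by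
  obtain ⟨M, hM⟩ := (isCompact_closedBall (0 : Fin d → ℝ) R).bddAbove_image S.τ_cont.continuousOn
  exact ⟨M, fun x hx => hM ⟨x, mem_closedBall_zero_iff.mpr hx, rfl⟩⟩

theorem exists_norm_le_of_tau_le_one : ∃ R, ∀ x, S.τ x ≤ 1 → ‖x‖ ≤ R := by
  obtain ⟨R, hR, hR1⟩ := S.exists_norm_le_of_tau_eq_one
  obtain ⟨M, hM⟩ := S.exists_tau_le_of_norm_le R
  refine ⟨R, fun x hx => le_of_not_gt fun hxR => ?_⟩
  have hx0 : 0 < S.τ x := S.τ_pos x (by rintro rfl; rw [norm_zero] at hxR; linarith)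
  set c := (max M 1 + 1) / S.τ x
  have hτz : S.τ (matPow S.E c *ᵥ x) = max M 1 + 1 := by
    rw [S.τ_scaling c (by positivity), div_mul_cancel₀ _ hx0.ne']
  have hzR : R < ‖matPow S.E c *ᵥ x‖ :=
    lt_of_not_ge fun h => by linarith [hM _ h, le_max_left M 1]
  obtain ⟨C, hC, hCR, hxC, hzC⟩ :=
    exists_isPreconnected_lt_norm_mem_matPow_mulVec S.E c hR hxR hzR
  obtain ⟨y, hyC, hy⟩ := hC.intermediate_value hxC hzC S.τ_cont.continuousOn
    ⟨hx, by linarith [le_max_right M 1]⟩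
  exact (hCR hyC).not_ge (hR1 y hy)

theorem exists_tau_add_le_of_tau_le_one :
    ∃ K, 1 ≤ K ∧ ∀ u v, S.τ u ≤ 1 → S.τ v ≤ 1 → S.τ (u + v) ≤ K := by
  obtain ⟨R, hR⟩ := S.exists_norm_le_of_tau_le_one
  obtain ⟨M, hM⟩ := S.exists_tau_le_of_norm_le (R + R)
  exact ⟨max 1 M, le_max_left _ _, fun u v hu hv =>
    (hM _ ((norm_add_le u v).trans (add_le_add (hR u hu) (hR v hv)))).trans (le_max_right _ _)⟩

end OSSetup

/-- Lemma 2.2: the radial part `τ` satisfies a quasi-triangle inequality. -/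
theorem stmt_1 {d p : ℕ} (S : OSSetup d p) :
    ∃ K : ℝ, 1 ≤ K ∧ ∀ x y : Fin d → ℝ, S.τ (x + y) ≤ K * (S.τ x + S.τ y) := by
  obtain ⟨K, hK1, hK⟩ := S.exists_tau_add_le_of_tau_le_one
  refine ⟨K, hK1, fun x y => ?_⟩
  have hx := S.tau_nonneg x
  have hy := S.tau_nonneg y
  rcases (add_nonneg hx hy).eq_or_lt with hs | hs
  · rw [S.tau_eq_zero_iff.mp (show S.τ x = 0 by linarith),
      S.tau_eq_zero_iff.mp (show S.τ y = 0 by linarith), add_zero, S.τ_zero]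
    linarith
  set s := S.τ x + S.τ y
  have hunscale : matPow S.E s *ᵥ (matPow S.E s⁻¹ *ᵥ x + matPow S.E s⁻¹ *ᵥ y) = x + y := by
    rw [Matrix.mulVec_add, Matrix.mulVec_mulVec, Matrix.mulVec_mulVec, matPow_mul_matPow_inv,
      Matrix.one_mulVec, Matrix.one_mulVec]
  have hscaled : ∀ w, S.τ w ≤ s → S.τ (matPow S.E s⁻¹ *ᵥ w) ≤ 1 := fun w hw => by
    rwa [S.τ_scaling _ (inv_pos.mpr hs), inv_mul_le_one₀ hs]
  calc S.τ (x + y) = s * S.τ (matPow S.E s⁻¹ *ᵥ x + matPow S.E s⁻¹ *ᵥ y) := by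
        rw [← S.τ_scaling s hs, hunscale]
    _ ≤ s * K := by gcongr; exact hK _ _ (hscaled x (by linarith)) (hscaled y (by linarith))
    _ = K * s := mul_comm _ _
end

section
/- If a continuous function φ : ℝ^d → [0,∞) is positive on ℝ^d \ {0} and Lipschitz on ℝ^d \ {0} (i.e. |φ(x) − φ(y)| ≤ C‖x − y‖₀ for some C > 0 and all nonzero x, y), then φ is (β,E)-admissible for every β with 0 < β < a₁. -/
open MeasureTheory Matrix Filter Topology

/-
On the generalised eigenspace of `E` for an eigenvalue `μ`, `exp (t E) v` is
`e^{tμ}` times a polynomial in `t`, hence `O(e^{βt})` as `t → -∞` whenever `β < Re μ`; since these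
spaces span `ℂ^d`, the Banach–Steinhaus theorem makes the bound uniform, i.e. `‖c^E‖ ≤ C c^β` for
`0 < c ≤ 1` and `β < a₁`. Writing `x = τ(x)^E l(x)` with `l(x)` on the bounded sphere `S₀` then gives
`‖x‖₀ ≤ K τ(x)^β` whenever `τ(x) ≤ 1`. The Lipschitz bound extends by continuity from pairs of
nonzero points to all pairs, so `|φ(x + y) - φ(y)| ≤ L ‖x‖₀ ≤ L K τ(x)^β`.
-/

open NormedSpace Asymptotics Set

theorem Complex.isBigO_exp_mul_pow_principal_Iic {μ : ℂ} {β : ℝ} (hβ : β < μ.re) (j : ℕ) :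
    (fun t : ℝ => Complex.exp (t * μ) * (t : ℂ) ^ j) =O[𝓟 (Iic 0)]
      fun t => Real.exp (β * t) := by
  set δ := μ.re - β
  have hδ : 0 < δ := sub_pos.2 hβ
  refine isBigO_principal.2 ⟨j.factorial / δ ^ j, fun t (ht : t ≤ 0) => ?_⟩
  have key : (δ * -t) ^ j / j.factorial ≤ Real.exp (δ * -t) :=
    Real.pow_div_factorial_le_exp _ (by nlinarith) j
  rw [norm_mul, Complex.norm_exp, norm_pow, Complex.norm_real, Real.norm_eq_abs,
    abs_of_nonpos ht, Real.norm_of_nonneg (Real.exp_pos _).le, Complex.re_ofReal_mul]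
  rw [mul_pow, div_le_iff₀ (by positivity)] at key
  have hβt : Real.exp (β * t) = Real.exp (t * μ.re) * Real.exp (δ * -t) := by
    rw [← Real.exp_add]; congr 1; ring
  rw [hβt, div_mul_eq_mul_div, le_div_iff₀ (by positivity)]
  calc Real.exp (t * μ.re) * (-t) ^ j * δ ^ j
        = Real.exp (t * μ.re) * (δ ^ j * (-t) ^ j) := by ring
    _ ≤ Real.exp (t * μ.re) * (Real.exp (δ * -t) * j.factorial) := by gcongr
    _ = _ := by ring

theorem Asymptotics.IsBigO.smul_const {α 𝕜 E : Type*} [NormedField 𝕜]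
    [SeminormedAddCommGroup E] [NormedSpace 𝕜 E] {l : Filter α} {f : α → 𝕜} {g : α → ℝ}
    (h : f =O[l] g) (w : E) :
    (fun x => f x • w) =O[l] g := by
  refine (isBigO_of_le' (c := ‖w‖) l fun x => ?_).trans h
  rw [norm_smul, mul_comm]

namespace Matrix

variable {n : Type*} [Fintype n] [DecidableEq n]

theorem exp_algebraMap (c : ℂ) :
    exp (algebraMap ℂ (Matrix n n ℂ) c) = algebraMap ℂ _ (Complex.exp c) := by
  let : NormedRing (Matrix n n ℂ) := Matrix.linftyOpNormedRing
  let : NormedAlgebra ℂ (Matrix n n ℂ) := Matrix.linftyOpNormedAlgebra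
  rw [Complex.exp_eq_exp_ℂ]
  exact (algebraMap_exp_comm _).symm

theorem exp_mulVec_eq_sum_of_pow_mulVec_eq_zero (N : Matrix n n ℂ) {k : ℕ} {v : n → ℂ}
    (hv : N ^ k *ᵥ v = 0) :
    exp N *ᵥ v = ∑ j ∈ Finset.range k, (j.factorial : ℂ)⁻¹ • (N ^ j *ᵥ v) := by
  have hsum : HasSum (fun j => ((j.factorial : ℂ)⁻¹ • N ^ j) *ᵥ v) (exp N *ᵥ v) := by
    let L : Matrix n n ℂ →ₗ[ℂ] n → ℂ := (LinearMap.applyₗ v).comp Matrix.toLin'.toLinearMap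
    let : NormedRing (Matrix n n ℂ) := Matrix.linftyOpNormedRing
    let : NormedAlgebra ℂ (Matrix n n ℂ) := Matrix.linftyOpNormedAlgebra
    rw [exp_eq_tsum ℂ]
    exact (expSeries_summable' N).hasSum.map L L.continuous_of_finiteDimensional
  rw [← hsum.tsum_eq, tsum_eq_sum (s := Finset.range k)]
  · simp only [Matrix.smul_mulVec]
  · intro j hj
    rw [Finset.mem_range, not_lt] at hj
    rw [Matrix.smul_mulVec, ← Nat.sub_add_cancel hj, pow_add, ← Matrix.mulVec_mulVec, hv,
      Matrix.mulVec_zero, smul_zero]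

theorem exp_smul_mulVec_eq_sum (A : Matrix n n ℂ) (μ t : ℂ) {k : ℕ} {v : n → ℂ}
    (hv : (A - μ • 1) ^ k *ᵥ v = 0) :
    exp (t • A) *ᵥ v = ∑ j ∈ Finset.range k,
      (Complex.exp (t * μ) * t ^ j / j.factorial) • ((A - μ • 1) ^ j *ᵥ v) := by
  set N := A - μ • 1
  have hsplit : t • A = algebraMap ℂ _ (t * μ) + t • N := by
    rw [Algebra.algebraMap_eq_smul_one, smul_sub, smul_smul]; abel
  have htN : (t • N) ^ k *ᵥ v = 0 := by rw [smul_pow, Matrix.smul_mulVec, hv, smul_zero]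
  rw [hsplit, Matrix.exp_add_of_commute _ _ (Algebra.commute_algebraMap_left _ _),
    exp_algebraMap, ← Matrix.mulVec_mulVec, exp_mulVec_eq_sum_of_pow_mulVec_eq_zero _ htN,
    Algebra.algebraMap_eq_smul_one, Matrix.smul_mulVec, Matrix.one_mulVec, Finset.smul_sum]
  refine Finset.sum_congr rfl fun j _ => ?_
  rw [smul_pow, Matrix.smul_mulVec, smul_smul, smul_smul]
  congr 1
  ring

theorem isBigO_exp_smul_mulVec_of_mem_maxGenEigenspace (A : Matrix n n ℂ) {μ : ℂ} {β : ℝ}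
    (hβ : β < μ.re) {v : n → ℂ}
    (hv : v ∈ Module.End.maxGenEigenspace (toLinAlgEquiv' A) μ) :
    (fun t : ℝ => exp ((t : ℂ) • A) *ᵥ v) =O[𝓟 (Iic 0)] fun t => Real.exp (β * t) := by
  obtain ⟨k, hk⟩ := (Module.End.mem_maxGenEigenspace _ _ _).1 hv
  have hkv : (A - μ • 1) ^ k *ᵥ v = 0 := by
    simpa [← toLinAlgEquiv'_apply] using hk
  simp_rw [exp_smul_mulVec_eq_sum A μ _ hkv]
  refine IsBigO.fun_sum fun j _ => ?_
  convert (Complex.isBigO_exp_mul_pow_principal_Iic hβ j).smul_const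
    ((j.factorial : ℂ)⁻¹ • ((A - μ • 1) ^ j *ᵥ v)) using 2 with t
  rw [smul_smul, div_eq_mul_inv]

theorem isBigO_exp_smul_mulVec (A : Matrix n n ℂ) {β : ℝ} (hβ : ∀ μ ∈ spectrum ℂ A, β < μ.re)
    (v : n → ℂ) :
    (fun t : ℝ => exp ((t : ℂ) • A) *ᵥ v) =O[𝓟 (Iic 0)] fun t => Real.exp (β * t) := by
  have hv : v ∈ ⨆ μ, Module.End.maxGenEigenspace (toLinAlgEquiv' A) μ := by
    rw [Module.End.iSup_maxGenEigenspace_eq_top]; trivial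
  refine Submodule.iSup_induction
    (motive := fun w => (fun t : ℝ => exp ((t : ℂ) • A) *ᵥ w) =O[𝓟 (Iic 0)]
      fun t => Real.exp (β * t))
    _ hv (fun μ w hw => ?_) ?_ fun w₁ w₂ h₁ h₂ => ?_
  · rcases eq_or_ne w 0 with rfl | hw0
    · simp only [Matrix.mulVec_zero]; exact isBigO_zero _ _
    have hμ : Module.End.HasEigenvalue (toLinAlgEquiv' A) μ :=
      Module.End.HasUnifEigenvalue.lt zero_lt_one ((Submodule.ne_bot_iff _).2 ⟨w, hw, hw0⟩)
    refine isBigO_exp_smul_mulVec_of_mem_maxGenEigenspace A (hβ μ ?_) hw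
    simpa [AlgEquiv.spectrum_eq] using hμ.mem_spectrum
  · simp only [Matrix.mulVec_zero]; exact isBigO_zero _ _
  · simp only [Matrix.mulVec_add]; exact h₁.add h₂

theorem exists_norm_exp_smul_mulVec_le (A : Matrix n n ℂ) {β : ℝ}
    (hβ : ∀ μ ∈ spectrum ℂ A, β < μ.re) :
    ∃ C > 0, ∀ t : ℝ, t ≤ 0 → ∀ x : n → ℂ,
      ‖exp ((t : ℂ) • A) *ᵥ x‖ ≤ C * Real.exp (β * t) * ‖x‖ := by
  let g : Iic (0 : ℝ) → (n → ℂ) →L[ℂ] (n → ℂ) := fun t =>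
    (Real.exp (β * t))⁻¹ • LinearMap.toContinuousLinearMap (toLin' (exp ((t : ℂ) • A)))
  have hg (t x) : ‖g t x‖ = (Real.exp (β * t))⁻¹ * ‖exp ((t : ℂ) • A) *ᵥ x‖ := by
    simp [g, norm_smul]
  have hbdd : ∀ x, ∃ c, ∀ t, ‖g t x‖ ≤ c := fun x => by
    obtain ⟨c, hc⟩ := isBigO_principal.1 (isBigO_exp_smul_mulVec A hβ x)
    refine ⟨c, fun t => ?_⟩
    have := hc t t.2
    rw [Real.norm_of_nonneg (Real.exp_pos _).le] at this
    rw [hg, inv_mul_le_iff₀ (Real.exp_pos _)]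
    linarith
  obtain ⟨C, hC⟩ := banach_steinhaus hbdd
  refine ⟨max C 1, by positivity, fun t ht x => ?_⟩
  have := ((g ⟨t, ht⟩).le_opNorm x).trans
    (mul_le_mul_of_nonneg_right ((hC _).trans (le_max_left C 1)) (norm_nonneg _))
  rw [hg, inv_mul_le_iff₀ (Real.exp_pos _)] at this
  linarith

theorem exp_map_ofReal (M : Matrix n n ℝ) :
    (exp M).map Complex.ofReal = exp (M.map Complex.ofReal) := by
  let : NormedRing (Matrix n n ℝ) := Matrix.linftyOpNormedRing
  let : NormedAlgebra ℝ (Matrix n n ℝ) := Matrix.linftyOpNormedAlgebra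
  let : NormedAlgebra ℚ (Matrix n n ℝ) := NormedAlgebra.restrictScalars ℚ ℝ _
  let : NormedRing (Matrix n n ℂ) := Matrix.linftyOpNormedRing
  exact map_exp Complex.ofRealHom.mapMatrix (continuous_id.matrix_map Complex.continuous_ofReal) M

end Matrix

theorem exists_norm_matPow_mulVec_le {d : ℕ} (E : Matrix (Fin d) (Fin d) ℝ) {β : ℝ}
    (hβ : ∀ μ ∈ spectrum ℂ (E.map Complex.ofReal), β < μ.re) :
    ∃ C > 0, ∀ c : ℝ, 0 < c → c ≤ 1 → ∀ x : Fin d → ℝ,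
      ‖matPow E c *ᵥ x‖ ≤ C * c ^ β * ‖x‖ := by
  obtain ⟨C, hC₀, hC⟩ := (E.map Complex.ofReal).exists_norm_exp_smul_mulVec_le hβ
  refine ⟨C, hC₀, fun c hc hc1 x => ?_⟩
  have hnorm : ∀ y : Fin d → ℝ, ‖Complex.ofReal ∘ y‖ = ‖y‖ := fun y => by
    simp [Pi.norm_def, Function.comp_def]
  have hmap :
      (matPow E c).map Complex.ofReal = exp ((Real.log c : ℂ) • E.map Complex.ofReal) := by
    rw [matPow, exp_map_ofReal]
    congr 1
    ext i j
    simp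
  have hvec : (matPow E c).map Complex.ofReal *ᵥ (Complex.ofReal ∘ x) =
      Complex.ofReal ∘ (matPow E c *ᵥ x) :=
    funext fun i => (RingHom.map_mulVec Complex.ofRealHom _ _ i).symm
  have := hC (Real.log c) (Real.log_nonpos hc.le hc1) (Complex.ofReal ∘ x)
  rwa [← hmap, hvec, hnorm, hnorm, mul_comm β, ← Real.rpow_def_of_pos hc] at this

theorem Seminorm.continuous_of_finiteDimensional {E : Type*} [NormedAddCommGroup E]
    [NormedSpace ℝ E] [FiniteDimensional ℝ E] (q : Seminorm ℝ E) : Continuous q :=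
  continuousOn_univ.1 (q.convexOn.continuousOn isOpen_univ)

theorem Seminorm.exists_norm_le_mul {E : Type*} [NormedAddCommGroup E]
    [NormedSpace ℝ E] [FiniteDimensional ℝ E] (q : Seminorm ℝ E)
    (hq : ∀ x, q x = 0 → x = 0) :
    ∃ C > 0, ∀ x, ‖x‖ ≤ C * q x := by
  rcases subsingleton_or_nontrivial E with hE | hE
  · exact ⟨1, one_pos, fun x => by simp [Subsingleton.elim x 0]⟩
  obtain ⟨x₀, hx₀, hmin⟩ := (isCompact_sphere (0 : E) 1).exists_isMinOn
    (NormedSpace.sphere_nonempty.2 zero_le_one) q.continuous_of_finiteDimensional.continuousOn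
  have hq₀ : 0 < q x₀ := (apply_nonneg q x₀).lt_of_ne' fun h => by simp [hq _ h] at hx₀
  refine ⟨(q x₀)⁻¹, inv_pos.2 hq₀, fun x => ?_⟩
  rcases eq_or_ne x 0 with rfl | hx
  · simp
  have : q x₀ ≤ q (‖x‖⁻¹ • x) := hmin (by simp [norm_smul, hx])
  rw [map_smul_eq_mul, norm_inv, norm_norm, le_inv_mul_iff₀ (norm_pos_iff.2 hx)] at this
  rwa [inv_mul_eq_div, le_div_iff₀ hq₀]

theorem abs_sub_le_of_forall_ne_zero {V : Type*} [NormedAddCommGroup V] [NormedSpace ℝ V]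
    [Nontrivial V] {φ ν : V → ℝ} (hφ : Continuous φ) (hν : Continuous ν) {C : ℝ}
    (h : ∀ x y, x ≠ 0 → y ≠ 0 → |φ x - φ y| ≤ C * ν (x - y)) (x y : V) :
    |φ x - φ y| ≤ C * ν (x - y) := by
  have hdense : Dense ({0}ᶜ ×ˢ {0}ᶜ : Set (V × V)) :=
    (dense_compl_singleton 0).prod (dense_compl_singleton 0)
  exact le_on_closure (f := fun q : V × V => |φ q.1 - φ q.2|) (g := fun q => C * ν (q.1 - q.2))
    (fun q hq => h q.1 q.2 hq.1 hq.2) (by fun_prop) (by fun_prop)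
    (hdense.closure_eq ▸ mem_univ (x, y))

namespace OSSetup

variable {d p : ℕ} (S : OSSetup d p)

theorem lt_re_of_mem_spectrum {β : ℝ} (hβ : β < S.a1) :
    ∀ μ ∈ spectrum ℂ (S.E.map Complex.ofReal), β < μ.re := by
  intro μ hμ
  rw [Matrix.mem_spectrum_iff_isRoot_charpoly,
    show S.E.map Complex.ofReal = S.E.map (algebraMap ℝ ℂ) from rfl, Matrix.charpoly_map,
    ← Polynomial.mem_roots ((S.E.charpoly_monic.map _).ne_zero)] at hμ
  obtain ⟨i, hi⟩ := S.spec_re μ hμ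
  rw [hi]
  exact hβ.trans_le (S.a_mono.monotone (Nat.zero_le i.val))

def seminorm : Seminorm ℝ (Fin d → ℝ) :=
  Seminorm.of S.ν S.ν_add S.ν_smul

@[simp]
theorem coe_seminorm : ⇑S.seminorm = S.ν :=
  rfl

theorem continuous_ν : Continuous S.ν :=
  S.seminorm.continuous_of_finiteDimensional

theorem exists_ν_le_mul_τ_rpow {β : ℝ} (hβ₀ : 0 < β) (hβ : β < S.a1) :
    ∃ K > 0, ∀ x, S.τ x ≤ 1 → S.ν x ≤ K * S.τ x ^ β := by
  obtain ⟨C, hC, hpow⟩ := exists_norm_matPow_mulVec_le S.E (S.lt_re_of_mem_spectrum hβ)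
  obtain ⟨C₁, hC₁, hν⟩ := S.seminorm.bound_of_continuous_normedSpace S.continuous_ν
  obtain ⟨C₂, hC₂, hnorm⟩ := S.seminorm.exists_norm_le_mul fun x => (S.ν_eq_zero x).1
  refine ⟨C₁ * C * C₂, by positivity, fun x hx => ?_⟩
  rcases eq_or_ne x 0 with rfl | hx0
  · simp [S.τ_zero, Real.zero_rpow hβ₀.ne', (S.ν_eq_zero 0).2]
  have hτ : 0 < S.τ x := S.τ_pos x hx0
  have hl : ‖S.l x‖ ≤ C₂ := by simpa [S.l_sphere x hx0] using hnorm (S.l x)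
  calc S.ν x ≤ C₁ * ‖x‖ := hν x
    _ = C₁ * ‖matPow S.E (S.τ x) *ᵥ S.l x‖ := by rw [S.polar x hx0]
    _ ≤ C₁ * (C * S.τ x ^ β * C₂) := by
        gcongr
        exact (hpow _ hτ hx _).trans (by gcongr)
    _ = C₁ * C * C₂ * S.τ x ^ β := by ring

end OSSetup

/-- Remark 2.7: a continuous function `φ : ℝ^d → [0,∞)` that is positive and Lipschitz
(w.r.t. `‖·‖₀`) on `ℝ^d \ {0}` is `(β,E)`-admissible for every `0 < β < a₁`. -/
theorem stmt_6 {d p : ℕ} (S : OSSetup d p) (φ : (Fin d → ℝ) → ℝ)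
    (hcont : Continuous φ) (hnonneg : ∀ x, 0 ≤ φ x) (hpos : ∀ x, x ≠ 0 → 0 < φ x)
    (hlip : ∃ C > (0 : ℝ), ∀ x y : Fin d → ℝ, x ≠ 0 → y ≠ 0 →
      |φ x - φ y| ≤ C * S.ν (x - y)) :
    ∀ β : ℝ, 0 < β → β < S.a1 → S.Admissible β φ := by
  intro β hβ₀ hβ
  obtain ⟨L, hL, hlip⟩ := hlip
  obtain ⟨K, hK, hντ⟩ := S.exists_ν_le_mul_τ_rpow hβ₀ hβ
  have : NeZero d := ⟨S.hd.ne'⟩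
  have hlip' := abs_sub_le_of_forall_ne_zero hcont S.continuous_ν hlip
  refine ⟨hβ₀, hcont, hnonneg, hpos,
    fun _ _ _ _ => ⟨L * K, by positivity, fun x y hx _ _ => ?_⟩⟩
  calc |φ (x + y) - φ y| ≤ L * S.ν x := by simpa using hlip' (x + y) y
    _ ≤ L * (K * S.τ x ^ β) := by gcongr; exact hντ x hx
    _ = L * K * S.τ x ^ β := by ring
end

section
/- Let φ : ℝ^d → [0,∞) be an E-homogeneous, (β,E)-admissible function, let 0 < α ≤ 2 and 0 < H < β, and let q = trace(E). Then for all c > 0, all m ≥ 1, all x₁, ..., x_m ∈ ℝ^d and all t₁, ..., t_m ∈ ℝ: ∫_{ℝ^d} |Σ_{j=1}^m t_j (φ(c^E x_j − y)^{H − q/α} − φ(−y)^{H − q/α})|^α dy = c^{αH} · ∫_{ℝ^d} |Σ_{j=1}^m t_j (φ(x_j − y)^{H − q/α} − φ(−y)^{H − q/α})|^α dy. (Since the finite-dimensional distributions of a symmetric α-stable integral are determined by such L^α-norms of the integrand, this expresses the operator scaling property {X_φ(c^E x)} =f.d.= {c^H X_φ(x)} of the moving-average field.) -/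
open MeasureTheory Matrix Filter Topology

/-! Substituting `y = c^E z` turns `dy` into `|det c^E| dz = c^q dz`, since
`det (exp A) = exp (trace A)`. Off the null set `{0, x₁, …, x_m}`, `E`-homogeneity gives
`φ(c^E w) = c φ(w)` for every argument, so each power `φ(·)^(H - q/α)` gains the factor
`c^(H - q/α)`, and the `α`-th power the factor `c^(αH - q)`; together with the Jacobian this is
`c^(αH)`. -/

namespace Matrix

variable {n : Type*} [Fintype n] [DecidableEq n]

theorem _root_.HasDerivAt.matrix_det {γ : ℝ → Matrix n n ℝ} {γ' : Matrix n n ℝ} {t : ℝ}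
    (h : HasDerivAt γ γ' t) :
    HasDerivAt (fun s => (γ s).det)
      (∑ σ : Equiv.Perm n, (Equiv.Perm.sign σ : ℝ) *
        ∑ i, (∏ j ∈ Finset.univ.erase i, γ t (σ j) j) * γ' (σ i) i) t := by
  have hentry (i j : n) : HasDerivAt (fun s => γ s i j) (γ' i j) t :=
    hasDerivAt_pi.1 (hasDerivAt_pi.1 h i) j
  simp_rw [det_apply']
  exact HasDerivAt.fun_sum fun σ _ =>
    (HasDerivAt.fun_finsetProd fun i _ => hentry (σ i) i).const_mul _

theorem hasDerivAt_det_one_add_smul (A : Matrix n n ℝ) :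
    HasDerivAt (fun s : ℝ => (1 + s • A).det) A.trace 0 := by
  set P := (det (1 + (Polynomial.X : Polynomial ℝ) • A.map Polynomial.C)).divX.divX
  have h := (((hasDerivAt_id (0 : ℝ)).const_mul A.trace).const_add 1).fun_add
    ((P.hasDerivAt 0).fun_mul (hasDerivAt_pow 2 (0 : ℝ)))
  rw [funext fun s : ℝ => det_one_add_smul s A]
  exact h.congr_deriv (by simp)

open scoped Norms.Operator in
theorem hasDerivAt_exp_smul_zero (A : Matrix n n ℝ) :
    HasDerivAt (fun s : ℝ => NormedSpace.exp (s • A)) A 0 := by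
  have h := hasDerivAt_exp_smul_const (𝕂 := ℝ) A 0
  rwa [zero_smul, NormedSpace.exp_zero, one_mul] at h

/-- Both `s ↦ exp (s • A)` and `s ↦ 1 + s • A` pass through `1` with velocity `A`, and the
derivative of `det` along a curve only depends on these two data. -/
theorem hasDerivAt_det_exp_smul_zero (A : Matrix n n ℝ) :
    HasDerivAt (fun s : ℝ => (NormedSpace.exp (s • A)).det) A.trace 0 := by
  have hline : HasDerivAt (fun s : ℝ => 1 + s • A) A 0 :=
    hasDerivAt_pi.2 fun i => hasDerivAt_pi.2 fun j => by
      simpa using ((hasDerivAt_id (0 : ℝ)).mul_const (A i j)).const_add ((1 : Matrix n n ℝ) i j)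
  have htrace := (hasDerivAt_det_one_add_smul A).unique hline.matrix_det
  refine (hasDerivAt_exp_smul_zero A).matrix_det.congr_deriv ?_
  rw [htrace, zero_smul, add_zero, NormedSpace.exp_zero]

theorem det_exp (A : Matrix n n ℝ) : (NormedSpace.exp A).det = Real.exp A.trace := by
  set f : ℝ → ℝ := fun s => (NormedSpace.exp (s • A)).det
  have hmul (s u : ℝ) : f (s + u) = f s * f u := by
    simp only [f, add_smul, exp_add_of_commute _ _ ((Commute.refl A).smul_left s |>.smul_right u),
      det_mul]
  have hderiv (s : ℝ) : HasDerivAt f (f s * A.trace) s := by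
    have h0 : HasDerivAt (fun u => f s * f u) (f s * A.trace) (s - s) := by
      rw [sub_self]
      exact (hasDerivAt_det_exp_smul_zero A).const_mul (f s)
    refine (h0.comp_sub_const s s).congr_of_eventuallyEq (.of_forall fun u => ?_)
    show f u = f s * f (u - s)
    rw [← hmul, add_sub_cancel]
  have hderiv' (s : ℝ) : HasDerivAt (fun u => f u * Real.exp (-A.trace * u)) 0 s := by
    refine ((hderiv s).mul ((hasDerivAt_id s).const_mul (-A.trace)).exp).congr_deriv ?_
    ring
  have hconst := is_const_of_deriv_eq_zero (fun s => (hderiv' s).differentiableAt)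
    (fun s => (hderiv' s).deriv) 1 0
  refine (mul_inv_eq_one₀ (Real.exp_ne_zero _)).1 ?_
  simpa [f, Real.exp_neg] using hconst

end Matrix

theorem det_matPow {d : ℕ} (E : Matrix (Fin d) (Fin d) ℝ) {c : ℝ} (hc : 0 < c) :
    (matPow E c).det = c ^ E.trace := by
  rw [matPow, Matrix.det_exp, Matrix.trace_smul, smul_eq_mul, Real.rpow_def_of_pos hc]

theorem integral_eq_abs_det_smul_integral_comp {E F : Type*} [NormedAddCommGroup E]
    [NormedSpace ℝ E] [MeasurableSpace E] [BorelSpace E] [FiniteDimensional ℝ E]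
    [NormedAddCommGroup F] [NormedSpace ℝ F] (μ : Measure E) [μ.IsAddHaarMeasure]
    (f : E ≃ₗ[ℝ] E) (g : E → F) :
    ∫ y, g y ∂μ = |LinearMap.det (f : E →ₗ[ℝ] E)| • ∫ x, g (f x) ∂μ := by
  let e := f.toContinuousLinearEquiv.toHomeomorph.toMeasurableEquiv
  have hdet : LinearMap.det (f : E →ₗ[ℝ] E) ≠ 0 := f.isUnit_det'.ne_zero
  have hmap : ∫ x, g (f x) ∂μ = ∫ y, g y ∂μ.map (f : E →ₗ[ℝ] E) := (integral_map_equiv e g).symm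
  rw [hmap, Measure.map_linearMap_addHaar_eq_smul_addHaar μ hdet, integral_smul_measure,
    ENNReal.toReal_ofReal (by positivity), smul_smul, abs_inv, mul_inv_cancel₀ (abs_ne_zero.2 hdet),
    one_smul]

theorem Matrix.integral_eq_abs_det_smul_integral_comp_mulVec {n F : Type*} [Fintype n]
    [DecidableEq n] [NormedAddCommGroup F] [NormedSpace ℝ F] (M : Matrix n n ℝ)
    (hM : IsUnit M.det) (g : (n → ℝ) → F) :
    ∫ y, g y = |M.det| • ∫ z, g (M *ᵥ z) := by
  have := integral_eq_abs_det_smul_integral_comp volume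
    (M.toLinearEquiv' (M.invertibleOfIsUnitDet hM)) g
  rwa [toLinearEquiv'_apply, LinearMap.det_toLin'] at this

theorem abs_sum_mul_rpow_sub_rpow_homogeneous {ι : Type*} (s : Finset ι) {c e α : ℝ} (hc : 0 < c)
    (t u : ι → ℝ) (v : ℝ) (hu : ∀ j, 0 ≤ u j) (hv : 0 ≤ v) :
    |∑ j ∈ s, t j * ((c * u j) ^ e - (c * v) ^ e)| ^ α
      = c ^ (e * α) * |∑ j ∈ s, t j * (u j ^ e - v ^ e)| ^ α := by
  have hce : 0 < c ^ e := Real.rpow_pos_of_pos hc e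
  calc |∑ j ∈ s, t j * ((c * u j) ^ e - (c * v) ^ e)| ^ α
      = |c ^ e * ∑ j ∈ s, t j * (u j ^ e - v ^ e)| ^ α := by
        simp only [Real.mul_rpow hc.le (hu _), Real.mul_rpow hc.le hv, Finset.mul_sum]
        congr 2
        exact Finset.sum_congr rfl fun j _ => by ring
    _ = c ^ (e * α) * |∑ j ∈ s, t j * (u j ^ e - v ^ e)| ^ α := by
        rw [abs_mul, abs_of_pos hce, Real.mul_rpow hce.le (abs_nonneg _), ← Real.rpow_mul hc.le]

theorem OSSetup.EHomogeneous.ae_abs_sum_rpow_matPow {d p : ℕ} {S : OSSetup d p}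
    {φ : (Fin d → ℝ) → ℝ} (hhom : S.EHomogeneous φ) (hφ : ∀ x, 0 ≤ φ x) {c : ℝ} (hc : 0 < c)
    (e α : ℝ) {m : ℕ} (x : Fin m → (Fin d → ℝ)) (t : Fin m → ℝ) :
    (fun z => |∑ j, t j * (φ (matPow S.E c *ᵥ x j - matPow S.E c *ᵥ z) ^ e
        - φ (-(matPow S.E c *ᵥ z)) ^ e)| ^ α)
      =ᵐ[volume] fun z => c ^ (e * α) * |∑ j, t j * (φ (x j - z) ^ e - φ (-z) ^ e)| ^ α := by
  have : Nonempty (Fin d) := ⟨⟨0, S.hd⟩⟩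
  have hae : ∀ᵐ z ∂(volume : Measure (Fin d → ℝ)), z ∉ insert 0 (Set.range x) :=
    measure_eq_zero_iff_ae_notMem.1 (((Set.finite_range x).insert 0).measure_zero _)
  filter_upwards [hae] with z hz
  simp only [Set.mem_insert_iff, Set.mem_range, not_or, not_exists] at hz
  have hxz (j : Fin m) : φ (matPow S.E c *ᵥ x j - matPow S.E c *ᵥ z) = c * φ (x j - z) := by
    rw [← mulVec_sub]
    exact hhom c hc _ (sub_ne_zero.2 (hz.2 j))
  have hz' : φ (-(matPow S.E c *ᵥ z)) = c * φ (-z) := by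
    rw [← mulVec_neg]
    exact hhom c hc _ (neg_ne_zero.2 hz.1)
  simp only [hxz, hz']
  exact abs_sum_mul_rpow_sub_rpow_homogeneous _ hc _ _ _ (fun _ => hφ _) (hφ _)

theorem stmt_11_general {d p : ℕ} (S : OSSetup d p) (β α H : ℝ) (φ : (Fin d → ℝ) → ℝ)
    (hhom : S.EHomogeneous φ) (hadm : S.Admissible β φ)
    (hα0 : 0 < α)
    (c : ℝ) (hc : 0 < c) (m : ℕ)
    (x : Fin m → (Fin d → ℝ)) (t : Fin m → ℝ) :
    ∫ y, |∑ j, t j * (φ ((matPow S.E c).mulVec (x j) - y) ^ (H - S.E.trace / α)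
        - φ (-y) ^ (H - S.E.trace / α))| ^ α
      = c ^ (α * H) *
        ∫ y, |∑ j, t j * (φ (x j - y) ^ (H - S.E.trace / α)
          - φ (-y) ^ (H - S.E.trace / α))| ^ α := by
  have hdet : (matPow S.E c).det = c ^ S.E.trace := det_matPow S.E hc
  have hdet_pos : 0 < (matPow S.E c).det := hdet ▸ Real.rpow_pos_of_pos hc _
  have hexp : S.E.trace + (H - S.E.trace / α) * α = α * H := by
    field_simp
    ring
  rw [(matPow S.E c).integral_eq_abs_det_smul_integral_comp_mulVec hdet_pos.ne'.isUnit,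
    integral_congr_ae (hhom.ae_abs_sum_rpow_matPow hadm.2.2.1 hc _ α x t), integral_const_mul,
    abs_of_pos hdet_pos, hdet, smul_eq_mul, ← mul_assoc, ← Real.rpow_add hc, hexp]

/-- Corollary 3.2 (a): operator scaling of the moving-average field, expressed via the
`L^α`-norms of the integrands which determine the finite-dimensional distributions:
for all `c > 0`, `x₁,...,x_m` and `t₁,...,t_m`,
`∫ |Σ_j t_j(φ(c^E x_j − y)^{H−q/α} − φ(−y)^{H−q/α})|^α dy
  = c^{αH} ∫ |Σ_j t_j(φ(x_j − y)^{H−q/α} − φ(−y)^{H−q/α})|^α dy`. -/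
theorem stmt_11 {d p : ℕ} (S : OSSetup d p) (β α H : ℝ) (φ : (Fin d → ℝ) → ℝ)
    (hhom : S.EHomogeneous φ) (hadm : S.Admissible β φ)
    (hα0 : 0 < α) (hα2 : α ≤ 2) (hH0 : 0 < H) (hHβ : H < β)
    (c : ℝ) (hc : 0 < c) (m : ℕ) (hm : 1 ≤ m)
    (x : Fin m → (Fin d → ℝ)) (t : Fin m → ℝ) :
    ∫ y, |∑ j, t j * (φ ((matPow S.E c).mulVec (x j) - y) ^ (H - S.E.trace / α)
        - φ (-y) ^ (H - S.E.trace / α))| ^ α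
      = c ^ (α * H) *
        ∫ y, |∑ j, t j * (φ (x j - y) ^ (H - S.E.trace / α)
          - φ (-y) ^ (H - S.E.trace / α))| ^ α :=
  stmt_11_general S β α H φ hhom hadm hα0 c hc m x t
end
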